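/- arXiv:2204.08053 — 6 statements merged into one kernel-verified Lean document; each statement's English description precedes it below -/
import Mathlib

section
/- Let g ∈ U(a,b) and z ∈ H_{a,b}. Then the b×b matrix g₃ z + g₄ is invertible, and the matrix w := (g₁ z + g₂)(g₃ z + g₄)⁻¹ again lies in H_{a,b}, i.e. 1_b − wᴴ w is positive definite. Hence the action g·z := (g₁ z + g₂)(g₃ z + g₄)⁻¹ of U(a,b) on H_{a,b} is well defined. -/
open Matrix
open scoped ComplexOrder

lemma posdef_conj_aux {n : ℕ} {P B : Matrix (Fin n) (Fin n) ℂ}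
    (hP : P.PosDef) (hB : IsUnit B) : (Bᴴ * P * B).PosDef := by
  refine posDef_iff_dotProduct_mulVec.mpr ⟨isHermitian_conjTranspose_mul_mul B hP.1, fun x hx => ?_⟩
  have hBx : B *ᵥ x ≠ 0 := by
    intro h
    exact hx (Matrix.mulVec_injective_iff_isUnit.mpr hB (by simpa using h))
  simpa only [star_mulVec, dotProduct_mulVec, vecMul_vecMul] using (posDef_iff_dotProduct_mulVec.mp hP).2 (x := B *ᵥ x) hBx

/-- The action of `U(a,b)` on the bounded domain `H_{a,b}` is well defined: for
`g = [[g₁,g₂],[g₃,g₄]]` with `gᴴ I_{a,b} g = I_{a,b}` and `z` with `1 - zᴴ z` positive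
definite, the matrix `g₃ z + g₄` is invertible and `w = (g₁ z + g₂)(g₃ z + g₄)⁻¹` again
satisfies `1 - wᴴ w` positive definite. -/
theorem stmt_5 {a b : ℕ}
    (g₁ : Matrix (Fin a) (Fin a) ℂ) (g₂ : Matrix (Fin a) (Fin b) ℂ)
    (g₃ : Matrix (Fin b) (Fin a) ℂ) (g₄ : Matrix (Fin b) (Fin b) ℂ)
    (hg : (Matrix.fromBlocks g₁ g₂ g₃ g₄)ᴴ *
        Matrix.fromBlocks (1 : Matrix (Fin a) (Fin a) ℂ) 0 0 (-1) *
        Matrix.fromBlocks g₁ g₂ g₃ g₄ =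
        Matrix.fromBlocks (1 : Matrix (Fin a) (Fin a) ℂ) 0 0 (-1))
    (z : Matrix (Fin a) (Fin b) ℂ)
    (hz : (1 - zᴴ * z).PosDef) :
    IsUnit (g₃ * z + g₄) ∧
      (1 - ((g₁ * z + g₂) * (g₃ * z + g₄)⁻¹)ᴴ *
        ((g₁ * z + g₂) * (g₃ * z + g₄)⁻¹)).PosDef := by
  simp only [Matrix.fromBlocks_conjTranspose, Matrix.fromBlocks_multiply,
    Matrix.mul_one, Matrix.mul_zero, Matrix.zero_mul, Matrix.mul_neg, Matrix.neg_mul,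
    Matrix.one_mul, add_zero, zero_add, Matrix.fromBlocks_inj, ← sub_eq_add_neg] at hg
  obtain ⟨h11, h12, h21, h22⟩ := hg
  simp only [Matrix.sub_mul, Matrix.zero_mul, zero_sub, Matrix.neg_mul, ← sub_eq_add_neg] at h11 h12 h21 h22
  have e31 : g₃ᴴ * g₃ - g₁ᴴ * g₁ = -1 := by rw [← neg_sub, h11]
  have e32 : g₃ᴴ * g₄ - g₁ᴴ * g₂ = 0 := by rw [← neg_sub, h12, neg_zero]
  have e41 : g₄ᴴ * g₃ - g₂ᴴ * g₁ = 0 := by rw [← neg_sub, h21, neg_zero]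
  have e42 : g₄ᴴ * g₄ - g₂ᴴ * g₂ = 1 := by rw [← neg_sub, h22, neg_neg]
  set A := g₁ * z + g₂ with hA
  set B := g₃ * z + g₄ with hB
  have key : Bᴴ * B - Aᴴ * A = 1 - zᴴ * z := by
    have expand : Bᴴ * B - Aᴴ * A =
        zᴴ * ((g₃ᴴ * g₃ - g₁ᴴ * g₁) * z) + zᴴ * (g₃ᴴ * g₄ - g₁ᴴ * g₂) +
          (g₄ᴴ * g₃ - g₂ᴴ * g₁) * z + (g₄ᴴ * g₄ - g₂ᴴ * g₂) := by
      simp only [hA, hB, conjTranspose_add, conjTranspose_mul, Matrix.add_mul,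
        Matrix.mul_add, Matrix.sub_mul, Matrix.mul_sub, Matrix.mul_assoc]
      abel
    rw [expand, e31, e32, e41, e42]
    simp only [Matrix.neg_mul, Matrix.one_mul, Matrix.mul_neg, Matrix.mul_zero,
      Matrix.mul_one, Matrix.zero_mul, add_zero, zero_add, Matrix.mul_assoc]
    abel
  have hBB : (Bᴴ * B).PosDef := by
    have hEq : Bᴴ * B = (1 - zᴴ * z) + Aᴴ * A := by
      rw [← key]; abel
    rw [hEq]
    exact hz.add_posSemidef (Matrix.posSemidef_conjTranspose_mul_self A)
  have hBunit : IsUnit B := by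
    have hdet : (Bᴴ * B).det ≠ 0 := hBB.det_pos.ne'
    rw [Matrix.det_mul] at hdet
    exact Matrix.isUnit_iff_isUnit_det _ |>.2 (IsUnit.mk0 _ (right_ne_zero_of_mul hdet))
  refine ⟨hBunit, ?_⟩
  have hBinv : IsUnit B⁻¹ := Matrix.isUnit_nonsing_inv_iff.2 hBunit
  have hBd := (Matrix.isUnit_iff_isUnit_det _).1 hBunit
  have h1 : (B⁻¹)ᴴ * (Bᴴ * B) * B⁻¹ = 1 := by
    rw [Matrix.mul_assoc, Matrix.mul_assoc, Matrix.mul_nonsing_inv _ hBd, Matrix.mul_one,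
      ← Matrix.conjTranspose_mul, Matrix.mul_nonsing_inv _ hBd, Matrix.conjTranspose_one]
  have hmain : 1 - (A * B⁻¹)ᴴ * (A * B⁻¹) = (B⁻¹)ᴴ * (Bᴴ * B - Aᴴ * A) * B⁻¹ := by
    rw [Matrix.mul_sub, Matrix.sub_mul, h1]
    congr 1
    simp only [conjTranspose_mul, Matrix.mul_assoc]
  rw [hmain, key]
  exact posdef_conj_aux hz hBinv
end

section
/- For every z ∈ H_{a,b} there exists g ∈ U(a,b) such that the b×b block g₄ of g is invertible and g₂ g₄⁻¹ = z, i.e. g·0 = z. Hence U(a,b) acts transitively on H_{a,b}, identifying H_{a,b} with the quotient U(a,b)/(U(a) × U(b)). -/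
open Matrix
open scoped ComplexOrder
open scoped MatrixOrder

private lemma aux_comm {n : ℕ} {M S : Matrix (Fin n) (Fin n) ℂ}
    (hM : IsUnit M) (hS : S * S = M⁻¹) : M * S = S * M := by
  have h1 : S * M⁻¹ = M⁻¹ * S := by rw [← hS, Matrix.mul_assoc]
  have hMdet := (Matrix.isUnit_iff_isUnit_det M).1 hM
  have h2 : S * M⁻¹ * M = S := by
    rw [Matrix.mul_assoc, Matrix.nonsing_inv_mul _ hMdet, Matrix.mul_one]
  calc M * S = M * (S * M⁻¹ * M) := by rw [h2]
    _ = M * (S * M⁻¹) * M := by rw [← Matrix.mul_assoc]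
    _ = M * (M⁻¹ * S) * M := by rw [h1]
    _ = M * M⁻¹ * S * M := by rw [← Matrix.mul_assoc]
    _ = S * M := by rw [Matrix.mul_nonsing_inv _ hMdet, Matrix.one_mul]

/-- Transitivity of the action of `U(a,b)` on `H_{a,b}`: for every `z` with `1 - zᴴ z`
positive definite there is `g = [[g₁,g₂],[g₃,g₄]]` in `U(a,b)` with `g₄` invertible and
`g₂ g₄⁻¹ = z`, i.e. `g · 0 = z`. -/
theorem stmt_7 {a b : ℕ} (z : Matrix (Fin a) (Fin b) ℂ)
    (hz : (1 - zᴴ * z).PosDef) :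
    ∃ (g₁ : Matrix (Fin a) (Fin a) ℂ) (g₂ : Matrix (Fin a) (Fin b) ℂ)
      (g₃ : Matrix (Fin b) (Fin a) ℂ) (g₄ : Matrix (Fin b) (Fin b) ℂ),
      (Matrix.fromBlocks g₁ g₂ g₃ g₄)ᴴ *
          Matrix.fromBlocks (1 : Matrix (Fin a) (Fin a) ℂ) 0 0 (-1) *
          Matrix.fromBlocks g₁ g₂ g₃ g₄ =
        Matrix.fromBlocks (1 : Matrix (Fin a) (Fin a) ℂ) 0 0 (-1) ∧
      IsUnit g₄ ∧ g₂ * g₄⁻¹ = z := by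
  classical
  set W : Matrix (Fin b) (Fin b) ℂ := (1 - zᴴ * z)⁻¹ with hWdef
  have hWpd : W.PosDef := hz.inv
  have hzdet := (Matrix.isUnit_iff_isUnit_det _).1 hz.isUnit
  have h1 : (1 - zᴴ * z) * W = 1 := Matrix.mul_nonsing_inv _ hzdet
  have hzzW : zᴴ * z * W = W - 1 := by
    have h := h1
    rw [Matrix.sub_mul, Matrix.one_mul] at h
    rw [← h]; abel
  -- F1 in left-assoc form
  have F1 : z * zᴴ * z * W * zᴴ = z * W * zᴴ - z * zᴴ := by
    have := congrArg (fun M => z * M * zᴴ) hzzW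
    simpa only [Matrix.mul_sub, Matrix.sub_mul, Matrix.mul_one, ← Matrix.mul_assoc] using this
  have hN : (1 - z * zᴴ) * (1 + z * W * zᴴ) = 1 := by
    simp only [Matrix.sub_mul, Matrix.mul_add, Matrix.mul_one, Matrix.one_mul,
      ← Matrix.mul_assoc, F1]
    abel
  have hNpd : (1 + z * W * zᴴ).PosDef :=
    Matrix.PosDef.add_posSemidef Matrix.PosDef.one
      (hWpd.posSemidef.mul_mul_conjTranspose_same z)
  have hinvN : (1 + z * W * zᴴ)⁻¹ = 1 - z * zᴴ := Matrix.inv_eq_left_inv hN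
  have hMpd : (1 - z * zᴴ).PosDef := hinvN ▸ hNpd.inv
  have hMdet := (Matrix.isUnit_iff_isUnit_det _).1 hMpd.isUnit
  have hMipd : ((1 - z * zᴴ)⁻¹).PosDef := hMpd.inv
  set X : Matrix (Fin a) (Fin a) ℂ := CFC.sqrt ((1 - z * zᴴ)⁻¹) with hXdef
  set Y : Matrix (Fin b) (Fin b) ℂ := CFC.sqrt W with hYdef
  have hX2 : X * X = (1 - z * zᴴ)⁻¹ := CFC.sqrt_mul_sqrt_self _ hMipd.posSemidef.nonneg
  have hY2 : Y * Y = W := CFC.sqrt_mul_sqrt_self _ hWpd.posSemidef.nonneg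
  have hXh : Xᴴ = X := (Matrix.nonneg_iff_posSemidef.1 (CFC.sqrt_nonneg ((1 - z * zᴴ)⁻¹))).1
  have hYh : Yᴴ = Y := (Matrix.nonneg_iff_posSemidef.1 (CFC.sqrt_nonneg W)).1
  have hXcomm : (1 - z * zᴴ) * X = X * (1 - z * zᴴ) := aux_comm hMpd.isUnit hX2
  have hYcomm : (1 - zᴴ * z) * Y = Y * (1 - zᴴ * z) := by
    apply aux_comm hz.isUnit; rw [hY2]
  have hXMX : X * X - X * z * zᴴ * X = 1 := by
    have e : X * X - X * z * zᴴ * X = X * (1 - z * zᴴ) * X := by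
      simp only [Matrix.mul_sub, Matrix.sub_mul, Matrix.mul_one, ← Matrix.mul_assoc]
    rw [e, Matrix.mul_assoc, hXcomm, ← Matrix.mul_assoc, hX2,
      Matrix.nonsing_inv_mul _ hMdet]
  have hYMY : Y * zᴴ * z * Y - Y * Y = -1 := by
    have e : Y * zᴴ * z * Y - Y * Y = -(Y * (1 - zᴴ * z) * Y) := by
      simp only [Matrix.mul_sub, Matrix.sub_mul, Matrix.mul_one, ← Matrix.mul_assoc]
      abel
    rw [e, Matrix.mul_assoc, hYcomm, ← Matrix.mul_assoc, hY2, hWdef,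
      Matrix.nonsing_inv_mul _ hzdet]
  have hYunit : IsUnit Y := by
    rw [Matrix.isUnit_iff_isUnit_det]
    have h : IsUnit (Y.det * Y.det) := by
      rw [← Matrix.det_mul, hY2]
      exact (Matrix.isUnit_iff_isUnit_det _).1 hWpd.isUnit
    exact isUnit_of_mul_isUnit_left h
  refine ⟨X, z * Y, zᴴ * X, Y, ?_, hYunit, ?_⟩
  · rw [Matrix.fromBlocks_conjTranspose, Matrix.fromBlocks_multiply,
      Matrix.fromBlocks_multiply]
    rw [Matrix.fromBlocks_inj]
    refine ⟨?_, ?_, ?_, ?_⟩ <;>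
      simp only [conjTranspose_mul, conjTranspose_conjTranspose, hXh, hYh, Matrix.mul_one,
        Matrix.mul_zero, Matrix.zero_mul, Matrix.mul_neg, Matrix.neg_mul, Matrix.one_mul,
        add_zero, zero_add, ← Matrix.mul_assoc]
    · simpa [sub_eq_add_neg] using hXMX
    · abel
    · abel
    · simpa [sub_eq_add_neg] using hYMY
  · rw [Matrix.mul_assoc, Matrix.mul_nonsing_inv _ ((Matrix.isUnit_iff_isUnit_det _).1 hYunit),
      Matrix.mul_one]
end

section
/- Let g = [[A, B],[C, D]] ∈ U(n,n) and Z ∈ H_n. Then the n×n matrix C Z + D is invertible, and the matrix W := (A Z + B)(C Z + D)⁻¹ again lies in H_n, i.e. i(Wᴴ − W) is positive definite. Hence the action g·Z := (A Z + B)(C Z + D)⁻¹ of U(n,n) on Hermitian upper half-space H_n is well defined. -/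
open Matrix
open scoped ComplexOrder

/-- The action of `U(n,n)` on Hermitian upper half-space `H_n` is well defined: for
`g = [[A,B],[C,D]]` with `gᴴ η g = η` (where `η = [[0,-1_n],[1_n,0]]`) and `Z` with
`i(Zᴴ - Z)` positive definite, the matrix `C Z + D` is invertible and
`W = (A Z + B)(C Z + D)⁻¹` again satisfies `i(Wᴴ - W)` positive definite. -/
theorem stmt_8 {n : ℕ} (hn : 0 < n)
    (A B C D : Matrix (Fin n) (Fin n) ℂ)
    (hg : (Matrix.fromBlocks A B C D)ᴴ *
        Matrix.fromBlocks (0 : Matrix (Fin n) (Fin n) ℂ) (-1) 1 0 *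
        Matrix.fromBlocks A B C D =
        Matrix.fromBlocks (0 : Matrix (Fin n) (Fin n) ℂ) (-1) 1 0)
    (Z : Matrix (Fin n) (Fin n) ℂ)
    (hZ : (Complex.I • (Zᴴ - Z)).PosDef) :
    IsUnit (C * Z + D) ∧
      (Complex.I • (((A * Z + B) * (C * Z + D)⁻¹)ᴴ -
        (A * Z + B) * (C * Z + D)⁻¹)).PosDef := by
  rw [Matrix.fromBlocks_conjTranspose, Matrix.fromBlocks_multiply,
    Matrix.fromBlocks_multiply] at hg
  have e11 := congrArg Matrix.toBlocks₁₁ hg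
  have e12 := congrArg Matrix.toBlocks₁₂ hg
  have e21 := congrArg Matrix.toBlocks₂₁ hg
  have e22 := congrArg Matrix.toBlocks₂₂ hg
  simp only [Matrix.toBlocks_fromBlocks₁₁, Matrix.toBlocks_fromBlocks₁₂,
    Matrix.toBlocks_fromBlocks₂₁, Matrix.toBlocks_fromBlocks₂₂,
    mul_zero, mul_one, mul_neg, zero_add, add_zero, neg_zero] at e11 e12 e21 e22
  set M := C * Z + D with hM
  set N := A * Z + B with hN
  -- Key identity: MᴴN - NᴴM = Z - Zᴴ
  have hkey : Mᴴ * N - Nᴴ * M = Z - Zᴴ := by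
    have expand : Mᴴ * N - Nᴴ * M =
        Zᴴ * (Cᴴ * A + -Aᴴ * C) * Z + Zᴴ * (Cᴴ * B + -Aᴴ * D)
        + (Dᴴ * A + -Bᴴ * C) * Z + (Dᴴ * B + -Bᴴ * D) := by
      rw [hM, hN]
      simp only [conjTranspose_add, conjTranspose_mul]
      noncomm_ring
    rw [expand, e11, e12, e21, e22]
    noncomm_ring
  -- positive definite matrix congruent identity
  have hP : (Complex.I • (Nᴴ * M - Mᴴ * N)).PosDef := by
    have : Nᴴ * M - Mᴴ * N = Zᴴ - Z := by
      have := hkey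
      linear_combination (norm := noncomm_ring) -this
    rw [this]; exact hZ
  -- Invertibility of M
  have hMunit : IsUnit M := by
    rw [Matrix.isUnit_iff_isUnit_det, isUnit_iff_ne_zero]
    intro hdet
    obtain ⟨v, hv, hMv⟩ := (Matrix.exists_mulVec_eq_zero_iff).2 hdet
    have hpos := (Matrix.posDef_iff_dotProduct_mulVec.mp hP).2 hv
    rw [Matrix.smul_mulVec, Matrix.sub_mulVec, ← Matrix.mulVec_mulVec,
      ← Matrix.mulVec_mulVec, hMv] at hpos
    simp only [Matrix.mulVec_zero, zero_sub, dotProduct_smul,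
      dotProduct_neg] at hpos
    rw [Matrix.dotProduct_mulVec, ← Matrix.star_mulVec, hMv] at hpos
    simp at hpos
  have hMM : M * M⁻¹ = 1 := Matrix.mul_nonsing_inv M (Matrix.isUnit_iff_isUnit_det M |>.1 hMunit)
  refine ⟨hMunit, ?_⟩
  -- W := N * M⁻¹; i(Wᴴ - W) = (M⁻¹)ᴴ * (i(Zᴴ - Z)) * M⁻¹
  have hW : Complex.I • ((N * M⁻¹)ᴴ - N * M⁻¹)
      = (M⁻¹)ᴴ * (Complex.I • (Zᴴ - Z)) * M⁻¹ := by
    have h1 : (N * M⁻¹)ᴴ - N * M⁻¹ = (M⁻¹)ᴴ * (Nᴴ * M - Mᴴ * N) * M⁻¹ := by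
      have h2 : (M⁻¹)ᴴ * Mᴴ = 1 := by rw [← Matrix.conjTranspose_mul, hMM, Matrix.conjTranspose_one]
      calc (N * M⁻¹)ᴴ - N * M⁻¹
          = (M⁻¹)ᴴ * Nᴴ - N * M⁻¹ := by rw [Matrix.conjTranspose_mul]
        _ = (M⁻¹)ᴴ * Nᴴ * (M * M⁻¹) - ((M⁻¹)ᴴ * Mᴴ) * (N * M⁻¹) := by rw [hMM, h2]; noncomm_ring
        _ = (M⁻¹)ᴴ * (Nᴴ * M - Mᴴ * N) * M⁻¹ := by noncomm_ring
    rw [h1]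
    have : Nᴴ * M - Mᴴ * N = Zᴴ - Z := by linear_combination (norm := noncomm_ring) -hkey
    rw [this, Matrix.mul_smul, Matrix.smul_mul]
  rw [hW]
  refine Matrix.posDef_iff_dotProduct_mulVec.mpr ⟨?_, ?_⟩
  · have hherm := hZ.isHermitian
    unfold Matrix.IsHermitian
    rw [Matrix.conjTranspose_mul, Matrix.conjTranspose_mul, Matrix.conjTranspose_conjTranspose,
      hherm.eq, Matrix.mul_assoc]
  · intro x hx
    have hx' : M⁻¹ *ᵥ x ≠ 0 := by
      intro h0
      apply hx
      have : M *ᵥ (M⁻¹ *ᵥ x) = M *ᵥ 0 := by rw [h0]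
      rwa [Matrix.mulVec_mulVec, hMM, Matrix.one_mulVec, Matrix.mulVec_zero] at this
    have := (Matrix.posDef_iff_dotProduct_mulVec.mp hZ).2 hx'
    have heq : star x ⬝ᵥ (M⁻¹ᴴ * Complex.I • (Zᴴ - Z) * M⁻¹) *ᵥ x
        = star (M⁻¹ *ᵥ x) ⬝ᵥ (Complex.I • (Zᴴ - Z)) *ᵥ (M⁻¹ *ᵥ x) := by
      rw [← Matrix.mulVec_mulVec, ← Matrix.mulVec_mulVec, Matrix.dotProduct_mulVec,
        ← Matrix.star_mulVec]
    rw [heq]; exact this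
end

section
/- Let a and b be nonnegative integers, let ν be a nonzero complex number, and let g = [[A, B],[C, D]] be a complex (a+b)×(a+b) matrix (blocks A of size a×a, B of size a×b, C of size b×a, D of size b×b) satisfying gᴴ I_{a,b} g = ν·I_{a,b}, where I_{a,b} = diag(1_a, −1_b) and ᴴ denotes conjugate transpose. Then for every z ∈ Mat_{a×b}(ℂ), det(B̄ zᵀ + Ā) = conj(det g) · ν^{−b} · det(C z + D), where B̄ and Ā denote the entrywise complex conjugates and zᵀ the transpose. -/
open Matrix

/-- For `g = [[A,B],[C,D]]` a unitary similitude, i.e. `gᴴ I_{a,b} g = ν·I_{a,b}` with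
`ν ≠ 0`, the determinants of the two factors of automorphy satisfy
`det(λ(g,z)) = det(B̄ zᵀ + Ā) = conj(det g) · ν^(-b) · det(C z + D)` for every `z`. -/
theorem stmt_11 {a b : ℕ} (ν : ℂ) (hν : ν ≠ 0)
    (A : Matrix (Fin a) (Fin a) ℂ) (B : Matrix (Fin a) (Fin b) ℂ)
    (C : Matrix (Fin b) (Fin a) ℂ) (D : Matrix (Fin b) (Fin b) ℂ)
    (hg : (Matrix.fromBlocks A B C D)ᴴ *
        Matrix.fromBlocks (1 : Matrix (Fin a) (Fin a) ℂ) 0 0 (-1) *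
        Matrix.fromBlocks A B C D =
        ν • Matrix.fromBlocks (1 : Matrix (Fin a) (Fin a) ℂ) 0 0 (-1)) :
    ∀ z : Matrix (Fin a) (Fin b) ℂ,
      (B.map (starRingEnd ℂ) * zᵀ + A.map (starRingEnd ℂ)).det =
        starRingEnd ℂ (Matrix.fromBlocks A B C D).det * ν ^ (-(b : ℤ)) * (C * z + D).det := by
  intro z
  set g : Matrix (Fin a ⊕ Fin b) (Fin a ⊕ Fin b) ℂ := Matrix.fromBlocks A B C D with hgdef
  set J : Matrix (Fin a ⊕ Fin b) (Fin a ⊕ Fin b) ℂ := Matrix.fromBlocks 1 0 0 (-1) with hJ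
  have hJJ : J * J = 1 := by
    simp [hJ, Matrix.fromBlocks_multiply, ← Matrix.fromBlocks_one]
  have h1 : (J * (gᴴ * J)) * g = ν • (1 : Matrix (Fin a ⊕ Fin b) (Fin a ⊕ Fin b) ℂ) := by
    rw [Matrix.mul_assoc, hg, Matrix.mul_smul, hJJ]
  have hinv : (ν⁻¹ • (J * (gᴴ * J))) * g = 1 := by
    rw [Matrix.smul_mul, h1, smul_smul, inv_mul_cancel₀ hν, one_smul]
  have hJgJ : J * (gᴴ * J) = Matrix.fromBlocks Aᴴ (-Cᴴ) (-Bᴴ) Dᴴ := by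
    rw [hgdef, hJ, Matrix.fromBlocks_conjTranspose]
    simp [Matrix.fromBlocks_multiply]
  -- the explicit left inverse of M := g * [[1,z],[0,1]]
  set P : Matrix (Fin a) (Fin a) ℂ := ν⁻¹ • (Aᴴ + z * Bᴴ) with hP
  set Q : Matrix (Fin a) (Fin b) ℂ := ν⁻¹ • (-Cᴴ - z * Dᴴ) with hQ
  set M : Matrix (Fin a ⊕ Fin b) (Fin a ⊕ Fin b) ℂ :=
    Matrix.fromBlocks A (A * z + B) C (C * z + D) with hM
  have hMg : M = g * Matrix.fromBlocks 1 z 0 1 := by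
    rw [hgdef, Matrix.fromBlocks_multiply]
    simp [hM]
  have hNM : Matrix.fromBlocks P Q (ν⁻¹ • (-Bᴴ)) (ν⁻¹ • Dᴴ) * M = 1 := by
    have hN : Matrix.fromBlocks P Q (ν⁻¹ • (-Bᴴ)) (ν⁻¹ • Dᴴ)
        = Matrix.fromBlocks 1 (-z) 0 1 * (ν⁻¹ • (J * (gᴴ * J))) := by
      rw [hJgJ, Matrix.mul_smul, Matrix.fromBlocks_multiply, hP, hQ, ← Matrix.fromBlocks_smul]
      congr 1 <;> simp [sub_eq_add_neg]
    rw [hN, hMg, Matrix.mul_assoc, ← Matrix.mul_assoc _ g, hinv, Matrix.one_mul,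
      Matrix.fromBlocks_multiply]
    simp [← Matrix.fromBlocks_one]
  have hNM' := hNM
  rw [hM, Matrix.fromBlocks_multiply, ← Matrix.fromBlocks_one] at hNM'
  have E1 : P * A + Q * C = 1 := congrArg Matrix.toBlocks₁₁ hNM'
  have E2 : P * (A * z + B) + Q * (C * z + D) = 0 := congrArg Matrix.toBlocks₁₂ hNM'
  have hT : Matrix.fromBlocks P Q 0 1 * M = Matrix.fromBlocks 1 0 C (C * z + D) := by
    rw [hM, Matrix.fromBlocks_multiply, E1, E2]
    simp
  have hdetT : P.det * M.det = (C * z + D).det := by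
    have := congrArg Matrix.det hT
    rwa [Matrix.det_mul, Matrix.det_fromBlocks_zero₂₁, Matrix.det_fromBlocks_zero₁₂,
      Matrix.det_one, Matrix.det_one, mul_one, one_mul] at this
  have hdetM : M.det = g.det := by
    rw [hMg, Matrix.det_mul, Matrix.det_fromBlocks_zero₂₁, Matrix.det_one, Matrix.det_one,
      mul_one, mul_one]
  have hdetP : P.det = (ν⁻¹) ^ a * (B.map (starRingEnd ℂ) * zᵀ + A.map (starRingEnd ℂ)).det := by
    rw [hP, Matrix.det_smul, Fintype.card_fin]
    congr 1
    rw [← Matrix.det_transpose (Aᴴ + z * Bᴴ)]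
    congr 1
    rw [Matrix.transpose_add, Matrix.transpose_mul, add_comm]
    congr 1 <;> simp [Matrix.conjTranspose]
  -- determinant of g
  have hdetg : (starRingEnd ℂ) g.det * g.det = ν ^ (a + b) := by
    have := congrArg Matrix.det hg
    rw [Matrix.det_mul, Matrix.det_mul, Matrix.det_conjTranspose, Matrix.det_smul,
      Fintype.card_sum, Fintype.card_fin, Fintype.card_fin] at this
    have hdJ : J.det = (-1 : ℂ) ^ b := by
      rw [hJ, Matrix.det_fromBlocks_zero₁₂, Matrix.det_one, one_mul]
      rw [show (-1 : Matrix (Fin b) (Fin b) ℂ) = -(1) from rfl, Matrix.det_neg,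
        Matrix.det_one, mul_one, Fintype.card_fin]
    rw [hdJ] at this
    have hne : ((-1 : ℂ) ^ b) ≠ 0 := by
      apply pow_ne_zero; norm_num
    apply mul_right_cancel₀ hne
    rw [starRingEnd_apply]
    calc star g.det * g.det * (-1:ℂ)^b = star g.det * (-1:ℂ)^b * g.det := by ring
      _ = ν ^ (a+b) * (-1:ℂ)^b := this
  -- combine
  have key : (C * z + D).det
      = (ν⁻¹) ^ a * (B.map (starRingEnd ℂ) * zᵀ + A.map (starRingEnd ℂ)).det * g.det := by
    rw [← hdetT, hdetP, hdetM]
  rw [key, show ν ^ (-(b:ℤ)) = (ν ^ b)⁻¹ by rw [_root_.zpow_neg, zpow_natCast], inv_pow]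
  field_simp
  linear_combination (-(B.map (starRingEnd ℂ) * zᵀ + A.map (starRingEnd ℂ)).det) * hdetg
end

section
/- Let p be a prime and let m and n be positive even integers with m ≡ n (mod p−1) and such that p−1 does not divide m. Then the rational number q := B_m/m − B_n/n is p-integral and divisible by p: p does not divide the denominator of q, and p divides the numerator of q. In other words, B_m/m ≡ B_n/n (mod p). -/
open Finset

namespace KummerAux

variable {p : ℕ} [hp : Fact p.Prime]








lemma norm_sum_le_of_le {ι : Type*} (s : Finset ι) (f : ι → ℚ_[p]) {C : ℝ}
    (hC : 0 ≤ C) (h : ∀ i ∈ s, ‖f i‖ ≤ C) : ‖∑ i ∈ s, f i‖ ≤ C := by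
  classical
  induction s using Finset.induction with
  | empty => simpa using hC
  | @insert a s' hx ih =>
    rw [Finset.sum_insert hx]
    refine (Padic.nonarchimedean _ _).trans (max_le (h a (mem_insert_self a s'))
      (ih fun i hi => h i (mem_insert_of_mem hi)))

lemma norm_sub_le_max (a b : ℚ_[p]) : ‖a - b‖ ≤ max ‖a‖ ‖b‖ := by
  rw [sub_eq_add_neg]
  simpa using Padic.nonarchimedean a (-b)

lemma norm_nat_le_one (k : ℕ) : ‖(k : ℚ_[p])‖ ≤ 1 := by
  simpa using Padic.norm_int_le_one (p := p) k

lemma nat_cast_ne_zero {d : ℕ} (hd : 0 < d) : (d : ℚ_[p]) ≠ 0 := by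
  exact_mod_cast Nat.cast_ne_zero.mpr hd.ne'

lemma norm_inv_nat (d : ℕ) (hd : 0 < d) :
    ‖((d : ℚ_[p]))⁻¹‖ = (p : ℝ) ^ (padicValNat p d) := by
  obtain ⟨u, hu⟩ : p ^ padicValNat p d ∣ d := pow_padicValNat_dvd
  have hu0 : u ≠ 0 := by rintro rfl; simp at hu; omega
  have hpu : ¬ p ∣ u := by
    rintro ⟨w, hw⟩
    refine pow_succ_padicValNat_not_dvd (p := p) hd.ne' ⟨w, ?_⟩
    conv_lhs => rw [hu, hw]
    rw [pow_succ]; ring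
  have hnu : ‖(u : ℚ_[p])‖ = 1 := by
    rcases lt_or_eq_of_le (norm_nat_le_one (p := p) u) with h | h
    · exfalso
      have h' : ‖((u : ℤ) : ℚ_[p])‖ < 1 := by rw [Int.cast_natCast]; exact h
      have := (Padic.norm_intCast_lt_one_iff (k := (u : ℤ))).mp h'
      exact hpu (by exact_mod_cast this)
    · exact h
  have hd' : ‖(d : ℚ_[p])‖ = ((p:ℝ) ^ (padicValNat p d))⁻¹ := by
    conv_lhs => rw [hu]
    push_cast
    rw [norm_mul, hnu, mul_one, norm_pow, Padic.norm_p, inv_pow]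
  rw [norm_inv, hd', inv_inv]

lemma padicValNat_add_one_le (d : ℕ) (hd : 2 ≤ d) : padicValNat p d + 1 ≤ d := by
  have h1 : p ^ padicValNat p d ≤ d := Nat.le_of_dvd (by omega) pow_padicValNat_dvd
  have h2 : padicValNat p d < 2 ^ padicValNat p d := Nat.lt_two_pow_self
  have h3 : 2 ^ padicValNat p d ≤ p ^ padicValNat p d :=
    Nat.pow_le_pow_left hp.out.two_le _
  omega

omit hp in
lemma key_exponent (d e : ℕ) (hp5 : 5 ≤ p) (hd : 3 ≤ d) (he : 1 ≤ e) :
    2 * e + padicValNat p d + 1 ≤ e * d := by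
  have h1 : p ^ padicValNat p d ≤ d := Nat.le_of_dvd (by omega) pow_padicValNat_dvd
  have h5 : 4 * padicValNat p d + 1 ≤ 5 ^ padicValNat p d := by
    induction padicValNat p d with
    | zero => simp
    | succ k ih => have : 5 ^ k ≥ 1 := Nat.one_le_pow _ _ (by norm_num)
                   rw [pow_succ]; omega
  have h6 : 5 ^ padicValNat p d ≤ p ^ padicValNat p d := Nat.pow_le_pow_left hp5 _
  -- so d ≥ 4v+1; need e*d ≥ 2e + v + 1, i.e. e*(d-2) ≥ v+1
  have hv : padicValNat p d + 3 ≤ d ∨ padicValNat p d = 0 := by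
    rcases Nat.eq_zero_or_pos (padicValNat p d) with h | h
    · right; exact h
    · left; omega
  rcases hv with h | h
  · nlinarith
  · rw [h]; nlinarith






lemma choose_identity {m i : ℕ} (hi : i ≤ m) :
    (m + 1) * m.choose i = (m + 1 - i) * (m + 1).choose i := by
  have h1 : m.choose i = m.choose (m - i) := (Nat.choose_symm hi).symm
  have h2 : (m + 1).choose i = (m + 1).choose (m + 1 - i) := (Nat.choose_symm (by omega)).symm
  have h3 : m - i + 1 = m + 1 - i := by omega
  have h4 := Nat.add_one_mul_choose_eq m (m - i)
  rw [h1, h2, ← h3, h4, mul_comm]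

/-- Faulhaber with the `/(m+1-i)` denominators. -/
lemma faulhaber' (N m : ℕ) :
    (∑ k ∈ range N, (k : ℚ) ^ m) =
      ∑ i ∈ range (m + 1),
        bernoulli i * (m.choose i) * (N : ℚ) ^ (m + 1 - i) / (m + 1 - i : ℕ) := by
  rw [sum_range_pow]
  refine Finset.sum_congr rfl fun i hi => ?_
  have hi' : i ≤ m := by simpa [Nat.lt_succ_iff] using hi
  have key : ((m:ℚ) + 1) * (m.choose i) = ((m + 1 - i : ℕ) : ℚ) * ((m + 1).choose i) := by
    exact_mod_cast congrArg (fun x : ℕ => (x : ℚ)) (choose_identity hi')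
  have h1 : ((m:ℚ) + 1) ≠ 0 := by positivity
  have h2 : ((m + 1 - i : ℕ) : ℚ) ≠ 0 := by
    have : 0 < m + 1 - i := by omega
    exact_mod_cast this.ne'
  rw [div_eq_div_iff h1 h2]
  linear_combination (-(bernoulli i * (N:ℚ)^(m+1-i))) * key

/-- the key rearranged identity: `B_m * N = S_m(N) - ∑_{i<m} B_i C(m,i) N^{m+1-i}/(m+1-i)`. -/
lemma bernoulli_mul_eq (N m : ℕ) :
    bernoulli m * (N : ℚ) = (∑ k ∈ range N, (k : ℚ) ^ m) -
      ∑ i ∈ range m, bernoulli i * (m.choose i) * (N : ℚ) ^ (m + 1 - i) / (m + 1 - i : ℕ) := by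
  rw [faulhaber' N m, Finset.sum_range_succ]
  simp



lemma one_le_p : (1:ℝ) ≤ (p:ℝ) := by exact_mod_cast hp.out.one_lt.le

lemma p_pos : (0:ℝ) < (p:ℝ) := by exact_mod_cast hp.out.pos

lemma zpow_le_p {j k : ℤ} (h : j ≤ k) : (p:ℝ) ^ j ≤ (p:ℝ) ^ k :=
  zpow_le_zpow_right₀ one_le_p h

/-- Norm bound on a generic Faulhaber tail term. -/
lemma norm_term {i : ℕ} (c d E : ℕ) (hd : 0 < d)
    {B : ℤ} (hb : ‖((bernoulli i : ℚ) : ℚ_[p])‖ ≤ (p:ℝ) ^ B) :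
    ‖((bernoulli i : ℚ) : ℚ_[p]) * (c : ℚ_[p]) * (p : ℚ_[p]) ^ E / (d : ℚ_[p])‖
      ≤ (p:ℝ) ^ (B + (padicValNat p d : ℤ) - E) := by
  rw [div_eq_mul_inv, norm_mul, norm_mul, norm_mul, norm_pow, Padic.norm_p,
    norm_inv_nat d hd]
  have h1 : ((p:ℝ)⁻¹) ^ E = (p:ℝ) ^ (-(E:ℤ)) := by
    rw [inv_pow, ← zpow_natCast, ← zpow_neg]
  have h2 : ((p:ℝ)) ^ (padicValNat p d) = (p:ℝ) ^ ((padicValNat p d : ℤ)) := by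
    rw [zpow_natCast]
  rw [h1, h2]
  have e1 : (p:ℝ) ^ (B + (padicValNat p d : ℤ) - E)
      = (p:ℝ) ^ B * 1 * (p:ℝ) ^ (-(E:ℤ)) * (p:ℝ) ^ ((padicValNat p d : ℤ)) := by
    rw [mul_one, ← zpow_add₀ p_pos.ne', ← zpow_add₀ p_pos.ne']
    congr 1; ring
  rw [e1]
  have hpn : (0:ℝ) < (p:ℝ) ^ (-(E:ℤ)) := zpow_pos p_pos _
  have hpv : (0:ℝ) < (p:ℝ) ^ ((padicValNat p d : ℤ)) := zpow_pos p_pos _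
  have step1 : ‖((bernoulli i : ℚ) : ℚ_[p])‖ * ‖((c:ℕ) : ℚ_[p])‖ ≤ (p:ℝ) ^ B * 1 :=
    mul_le_mul hb (norm_nat_le_one c) (norm_nonneg _) (zpow_nonneg p_pos.le _)
  exact mul_le_mul_of_nonneg_right (mul_le_mul_of_nonneg_right step1 hpn.le) hpv.le

/-- von Staudt–Clausen type bound : `‖B_m‖_p ≤ p`. -/
lemma norm_bernoulli_le (m : ℕ) : ‖((bernoulli m : ℚ) : ℚ_[p])‖ ≤ (p:ℝ) ^ (1:ℤ) := by
  induction m using Nat.strong_induction_on with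
  | _ m ih =>
    have key := congrArg (fun q : ℚ => (q : ℚ_[p])) (bernoulli_mul_eq p m)
    push_cast at key
    -- key : ↑B_m * ↑p = ∑ k in range p, ↑k^m - ∑ i in range m, ↑B_i * ↑C * ↑p^(m+1-i)/↑(m+1-i)
    have hnp : ‖((bernoulli m : ℚ) : ℚ_[p]) * (p : ℚ_[p])‖ ≤ 1 := by
      rw [key]
      refine (norm_sub_le_max _ _).trans (max_le ?_ ?_)
      · exact norm_sum_le_of_le _ _ zero_le_one fun k _ => by
          rw [norm_pow]
          exact pow_le_one₀ (norm_nonneg _) (norm_nat_le_one k)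
      · refine norm_sum_le_of_le _ _ zero_le_one fun i hi => ?_
        have hi' : i < m := mem_range.mp hi
        have hd : 0 < m + 1 - i := by omega
        have := norm_term (p := p) (i := i) (m.choose i) (m + 1 - i) (m + 1 - i) hd
          (ih i hi')
        refine this.trans ?_
        have hv : (padicValNat p (m + 1 - i) : ℤ) + 1 ≤ (m + 1 - i : ℕ) := by
          exact_mod_cast padicValNat_add_one_le (m + 1 - i) (by omega)
        calc (p:ℝ) ^ (1 + (padicValNat p (m+1-i) : ℤ) - (m+1-i : ℕ))
            ≤ (p:ℝ) ^ (0:ℤ) := zpow_le_p (p := p) (by omega)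
          _ = 1 := zpow_zero _
    rw [norm_mul] at hnp
    have hp1 : ‖(p : ℚ_[p])‖ = (p:ℝ)⁻¹ := Padic.norm_p
    rw [hp1] at hnp
    have := mul_le_mul_of_nonneg_right hnp (le_of_lt (p_pos (p := p)))
    rw [mul_assoc, inv_mul_cancel₀ (p_pos (p := p)).ne', mul_one, one_mul] at this
    simpa using this



lemma norm_bernoulli_one_le (hp5 : 5 ≤ p) : ‖((bernoulli 1 : ℚ) : ℚ_[p])‖ ≤ (p:ℝ) ^ (0:ℤ) := by
  rw [bernoulli_one]
  have hc : ((-1/2 : ℚ) : ℚ_[p]) = -(((2:ℕ) : ℚ_[p]))⁻¹ := by push_cast; ring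
  rw [hc, norm_neg, norm_inv_nat 2 (by norm_num),
    padicValNat.eq_zero_of_not_dvd (fun h => by have := Nat.le_of_dvd (by norm_num) h; omega)]
  simp

lemma S_estimate (e m : ℕ) (he : 1 ≤ e) (hm : 1 ≤ m) (hme : Even m) (hp5 : 5 ≤ p) :
    ‖(∑ k ∈ range (p^e), ((k:ℚ_[p])) ^ m) - (p:ℚ_[p])^e * ((bernoulli m : ℚ) : ℚ_[p])‖
      ≤ (p:ℝ) ^ (-(2*e : ℤ)) := by
  have key := congrArg (fun q : ℚ => (q : ℚ_[p])) (bernoulli_mul_eq (p^e) m)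
  push_cast at key
  have h2 : (∑ k ∈ range (p^e), ((k:ℚ_[p])) ^ m) - (p:ℚ_[p])^e * ((bernoulli m : ℚ) : ℚ_[p])
      = ∑ i ∈ range m, ((bernoulli i : ℚ) : ℚ_[p]) * (m.choose i : ℚ_[p]) *
          ((p:ℚ_[p]) ^ e) ^ (m + 1 - i) / ((m + 1 - i : ℕ) : ℚ_[p]) := by
    rw [eq_sub_iff_add_eq] at key
    rw [← key]; ring
  rw [h2]
  refine norm_sum_le_of_le _ _ (zpow_nonneg (p_pos (p:=p)).le _) fun i hi => ?_
  have hi' : i < m := mem_range.mp hi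
  have hd : 0 < m + 1 - i := by omega
  rw [← pow_mul]
  by_cases hlast : i = m - 1
  · -- d = 2 case
    rcases Nat.lt_or_ge m 4 with hm4 | hm4
    · -- m = 2, i = 1
      have hm2 : m = 2 := by
        rcases hme with ⟨t, ht⟩; omega
      subst hm2
      have hi1 : i = 1 := by omega
      subst hi1
      have := norm_term (p := p) (i := 1) ((2:ℕ).choose 1) (2 + 1 - 1) (e * (2 + 1 - 1)) hd
        (norm_bernoulli_one_le hp5)
      refine this.trans (zpow_le_p (p := p) ?_)
      have hv : padicValNat p (2 + 1 - 1) = 0 := by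
        apply padicValNat.eq_zero_of_not_dvd
        intro h; have := Nat.le_of_dvd (by norm_num) h; omega
      rw [hv]
      push_cast
      omega
    · -- m ≥ 4 : bernoulli (m-1) = 0
      have hodd : Odd (m - 1) := by
        rcases hme with ⟨t, ht⟩
        exact ⟨t - 1, by omega⟩
      have hb0 : bernoulli (m - 1) = 0 := by
        rw [bernoulli_eq_bernoulli'_of_ne_one (by omega)]
        exact bernoulli'_eq_zero_of_odd hodd (by omega)
      rw [hlast, hb0]
      simp only [Rat.cast_zero, zero_mul, zero_div, norm_zero]
      exact zpow_nonneg (p_pos (p:=p)).le _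
  · -- d ≥ 3 case
    have hd3 : 3 ≤ m + 1 - i := by omega
    have := norm_term (p := p) (i := i) (m.choose i) (m + 1 - i) (e * (m + 1 - i)) hd
      (norm_bernoulli_le i)
    refine this.trans (zpow_le_p (p := p) ?_)
    have hke := key_exponent (p := p) (m + 1 - i) e hp5 hd3 he
    have hcast : ((2*e + padicValNat p (m+1-i) + 1 : ℕ) : ℤ) ≤ ((e*(m+1-i) : ℕ) : ℤ) := by
      exact_mod_cast hke
    push_cast at hcast
    omega


-- integer lemmas
omit hp in
lemma sum_mod_mul (N a : ℕ) (hN : 1 < N) (ha : a.Coprime N) (f : ℕ → ℤ) :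
    ∑ j ∈ range N, f ((j * a) % N) = ∑ j ∈ range N, f j := by
  obtain ⟨b, -, hb⟩ := Nat.exists_mul_mod_eq_one_of_coprime ha hN
  refine Finset.sum_nbij' (fun j => (j * a) % N) (fun k => (k * b) % N) ?_ ?_ ?_ ?_ ?_
  · intro j hj; exact mem_range.mpr (Nat.mod_lt _ (by omega))
  · intro k hk; exact mem_range.mpr (Nat.mod_lt _ (by omega))
  · intro j hj
    have hj' : j < N := mem_range.mp hj
    show (j * a % N) * b % N = j
    have h1 : (j * a % N) * b % N = j * (a * b) % N := by
      rw [Nat.mod_mul_mod, mul_assoc]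
    rw [h1, Nat.mul_mod, hb, mul_one, Nat.mod_mod_of_dvd _ dvd_rfl, Nat.mod_eq_of_lt hj']
  · intro k hk
    have hk' : k < N := mem_range.mp hk
    show (k * b % N) * a % N = k
    have h1 : (k * b % N) * a % N = k * (b * a) % N := by
      rw [Nat.mod_mul_mod, mul_assoc]
    rw [h1, mul_comm b a, Nat.mul_mod, hb, mul_one, Nat.mod_mod_of_dvd _ dvd_rfl,
      Nat.mod_eq_of_lt hk']
  · intro j hj; rfl

lemma pow_congr_aux (x y : ℤ) (m : ℕ) (hm : 1 ≤ m) :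
    y^2 ∣ (x + y)^m - x^m - m * x^(m-1) * y := by
  induction m, hm using Nat.le_induction with
  | base => simp
  | succ m hm ih =>
    obtain ⟨c, hc⟩ := ih
    refine ⟨(x + y) * c + m * x^(m-1), ?_⟩
    have h3 : x ^ (m-1) * x = x ^ m := by
      rw [← pow_succ]; congr 1; omega
    have h4 : (m + 1 : ℕ) - 1 = m := by omega
    rw [h4]
    push_cast
    linear_combination (x + y) * hc + (m:ℤ) * y * h3

lemma voronoi (N a m : ℕ) (hN : 1 < N) (ha : a.Coprime N) (hm : 1 ≤ m) :
    ((N:ℤ))^2 ∣ ((a:ℤ)^m * (∑ j ∈ range N, (j:ℤ)^m) - (∑ j ∈ range N, (j:ℤ)^m)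
      - m * N * ∑ j ∈ range N, ((j*a)/N : ℕ) * (((j*a) % N : ℕ):ℤ)^(m-1)) := by
  have hsum : ∑ j ∈ range N, (((j*a) % N : ℕ):ℤ)^m = ∑ j ∈ range N, (j:ℤ)^m :=
    sum_mod_mul N a hN ha (fun k => (k:ℤ)^m)
  have key : ∀ j, ((N:ℤ))^2 ∣ (((j*a : ℕ)):ℤ)^m - (((j*a) % N : ℕ):ℤ)^m
      - m * N * (((j*a)/N : ℕ):ℤ) * (((j*a) % N : ℕ):ℤ)^(m-1) := by
    intro j
    have hdm : N * ((j*a)/N) + (j*a) % N = j * a := Nat.div_add_mod _ _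
    have h0 := pow_congr_aux ((((j*a) % N : ℕ)):ℤ) ((N:ℤ) * (((j*a)/N : ℕ):ℤ)) m hm
    obtain ⟨c, hc⟩ := h0
    refine ⟨(((j*a)/N : ℕ):ℤ)^2 * c, ?_⟩
    have hcast : (((j*a : ℕ)):ℤ) = (((j*a) % N : ℕ):ℤ) + (N:ℤ) * (((j*a)/N : ℕ):ℤ) := by
      have h5 : ((N * ((j*a)/N) + (j*a) % N : ℕ) : ℤ) = ((j*a : ℕ) : ℤ) := by
        exact_mod_cast congrArg (fun t : ℕ => (t:ℤ)) hdm
      push_cast at h5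
      push_cast
      linarith
    rw [hcast]
    linear_combination hc
  have total : ((N:ℤ))^2 ∣ ∑ j ∈ range N, ((((j*a : ℕ)):ℤ)^m - (((j*a) % N : ℕ):ℤ)^m
      - m * N * (((j*a)/N : ℕ):ℤ) * (((j*a) % N : ℕ):ℤ)^(m-1)) :=
    Finset.dvd_sum fun j _ => key j
  have expand : ∑ j ∈ range N, ((((j*a : ℕ)):ℤ)^m - (((j*a) % N : ℕ):ℤ)^m
      - m * N * (((j*a)/N : ℕ):ℤ) * (((j*a) % N : ℕ):ℤ)^(m-1))
      = (a:ℤ)^m * (∑ j ∈ range N, (j:ℤ)^m) - (∑ j ∈ range N, (j:ℤ)^m)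
      - m * N * ∑ j ∈ range N, ((j*a)/N : ℕ) * (((j*a) % N : ℕ):ℤ)^(m-1) := by
    have e1 : ∑ j ∈ range N, (((j*a : ℕ)):ℤ)^m = (a:ℤ)^m * ∑ j ∈ range N, (j:ℤ)^m := by
      rw [Finset.mul_sum]
      refine Finset.sum_congr rfl fun j _ => ?_
      push_cast
      ring
    have e2 : ∑ j ∈ range N, (m:ℤ) * (N:ℤ) * (((j*a)/N : ℕ):ℤ) * (((j*a) % N : ℕ):ℤ)^(m-1)
        = (m:ℤ) * (N:ℤ) * ∑ j ∈ range N, (((j*a)/N : ℕ):ℤ) * (((j*a) % N : ℕ):ℤ)^(m-1) := by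
      rw [Finset.mul_sum]
      exact Finset.sum_congr rfl fun j _ => by ring
    rw [Finset.sum_sub_distrib, Finset.sum_sub_distrib, hsum, e1, e2]
  rwa [expand] at total


lemma pow_mod_aux {m n : ℕ} (hm : 1 ≤ m) (hmn : m ≤ n) (hc : m ≡ n [MOD p-1])
    (x : ZMod p) : x ^ m = x ^ n := by
  obtain ⟨k, hk⟩ := (Nat.modEq_iff_dvd' hmn).mp hc
  have hn : n = m + (p-1) * k := by omega
  subst hn
  by_cases hx : x = 0
  · subst hx
    rw [zero_pow (by omega), zero_pow (by omega)]
  · rw [pow_add, pow_mul, ZMod.pow_card_sub_one_eq_one hx, one_pow, mul_one]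

lemma pow_mod {m n : ℕ} (hm : 1 ≤ m) (hn : 1 ≤ n) (hc : m ≡ n [MOD p-1])
    (x : ZMod p) : x ^ m = x ^ n := by
  rcases le_total m n with h | h
  · exact pow_mod_aux hm h hc x
  · exact (pow_mod_aux hn h hc.symm x).symm

lemma int_pow_sub_dvd {m n : ℕ} (hm : 1 ≤ m) (hn : 1 ≤ n) (hc : m ≡ n [MOD p-1]) (r : ℕ) :
    (p:ℤ) ∣ (r:ℤ)^m - (r:ℤ)^n := by
  have := pow_mod (p := p) hm hn hc (r : ZMod p)
  have h0 : (((r:ℤ)^m - (r:ℤ)^n : ℤ) : ZMod p) = 0 := by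
    push_cast
    rw [this, sub_self]
  exact (ZMod.intCast_zmod_eq_zero_iff_dvd _ _).mp h0

/-- A primitive root mod p packaged with the facts we need. -/
lemma exists_primitive_root (M : ℕ) (hM : ¬ (p - 1) ∣ M) :
    ∃ a : ℕ, ¬ p ∣ a ∧ ¬ (p:ℤ) ∣ ((a:ℤ)^M - 1) := by
  obtain ⟨g, hg⟩ := IsCyclic.exists_generator (α := (ZMod p)ˣ)
  have horder : orderOf g = p - 1 := by
    rw [orderOf_eq_card_of_forall_mem_zpowers hg, Nat.card_eq_fintype_card,
      ZMod.card_units_eq_totient, Nat.totient_prime hp.out]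
  refine ⟨((g : (ZMod p)ˣ) : ZMod p).val, ?_, ?_⟩
  · intro hdvd
    have h0 : ((((g : (ZMod p)ˣ) : ZMod p).val : ℕ) : ZMod p) = 0 :=
      (ZMod.natCast_eq_zero_iff _ _).mpr hdvd
    rw [ZMod.natCast_val, ZMod.cast_id] at h0
    exact g.ne_zero h0
  · intro hdvd
    have h0 : ((((( (g : (ZMod p)ˣ) : ZMod p).val : ℤ)^M - 1 : ℤ)) : ZMod p) = 0 :=
      (ZMod.intCast_zmod_eq_zero_iff_dvd _ _).mpr hdvd
    push_cast at h0
    rw [ZMod.natCast_val, ZMod.cast_id, sub_eq_zero] at h0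
    have hu : (g : (ZMod p)ˣ)^M = 1 := by
      ext
      push_cast
      exact h0
    exact hM (horder ▸ orderOf_dvd_of_pow_eq_one hu)


/-- the integer `U`-sum. -/
def U (p a M e : ℕ) : ℤ :=
  ∑ j ∈ Finset.range (p^e), ((j*a/(p^e) : ℕ) : ℤ) * (((j*a) % (p^e) : ℕ) : ℤ)^(M-1)

lemma half (a e M : ℕ) (hp5 : 5 ≤ p) (hM : 0 < M) (hMe : Even M)
    (he : padicValNat p M < e) (ha : ¬ p ∣ a) :
    ‖((bernoulli M : ℚ) : ℚ_[p]) / (M : ℚ_[p]) * ((a:ℚ_[p])^M - 1) - ((U p a M e : ℤ) : ℚ_[p])‖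
      ≤ (p:ℝ)^(-1:ℤ) := by
  have hM2 : 2 ≤ M := by rcases hMe with ⟨t, ht⟩; omega
  have he1 : 1 ≤ e := by omega
  have hp1 : 1 < p := hp.out.one_lt
  have hN1 : 1 < p^e := Nat.one_lt_pow (by omega) hp1
  have hacop : a.Coprime (p^e) := Nat.Coprime.pow_right e ((hp.out.coprime_iff_not_dvd).mpr ha).symm
  -- the Voronoi divisibility, in norm form
  have hV := voronoi (p^e) a M hN1 hacop (by omega)
  have hVnorm : ‖(((a:ℤ)^M * (∑ j ∈ range (p^e), (j:ℤ)^M) - (∑ j ∈ range (p^e), (j:ℤ)^M)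
      - M * (p^e) * U p a M e : ℤ) : ℚ_[p])‖ ≤ (p:ℝ)^(-(2*e:ℕ) : ℤ) := by
    rw [Padic.norm_int_le_pow_iff_dvd]
    have : ((p:ℤ))^(2*e) = ((p^e : ℕ) : ℤ)^2 := by push_cast; rw [← pow_mul, mul_comm]
    rw [this]
    unfold U
    exact_mod_cast hV
  -- cast it into a ℚ_[p] statement
  set S : ℚ_[p] := ∑ k ∈ range (p^e), ((k:ℚ_[p])) ^ M with hSdef
  have hX : ‖(a:ℚ_[p])^M * S - S - (M:ℚ_[p]) * (p:ℚ_[p])^e * ((U p a M e : ℤ) : ℚ_[p])‖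
      ≤ (p:ℝ)^(-(2*e:ℕ) : ℤ) := by
    refine le_trans (le_of_eq ?_) hVnorm
    congr 1
    push_cast [hSdef]
    ring
  have hY := S_estimate e M he1 (by omega) hMe hp5
  -- the identity
  have hM0 : (M:ℚ_[p]) ≠ 0 := by
    exact_mod_cast Nat.cast_ne_zero.mpr (by omega)
  have hpe0 : ((p:ℚ_[p]))^e ≠ 0 := by
    apply pow_ne_zero
    exact_mod_cast Nat.cast_ne_zero.mpr (by omega)
  have hid : ((bernoulli M : ℚ) : ℚ_[p]) / (M : ℚ_[p]) * ((a:ℚ_[p])^M - 1)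
        - ((U p a M e : ℤ) : ℚ_[p])
      = (((a:ℚ_[p])^M * S - S - (M:ℚ_[p]) * (p:ℚ_[p])^e * ((U p a M e : ℤ) : ℚ_[p]))
          - ((a:ℚ_[p])^M - 1) * (S - (p:ℚ_[p])^e * ((bernoulli M : ℚ) : ℚ_[p])))
        / ((M:ℚ_[p]) * (p:ℚ_[p])^e) := by
    field_simp
    ring
  rw [hid]
  have hA1 : ‖(a:ℚ_[p])^M - 1‖ ≤ 1 := by
    have : ((( (a:ℤ)^M - 1 : ℤ)) : ℚ_[p]) = (a:ℚ_[p])^M - 1 := by push_cast; ring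
    rw [← this]
    exact Padic.norm_int_le_one _
  have hnum : ‖((a:ℚ_[p])^M * S - S - (M:ℚ_[p]) * (p:ℚ_[p])^e * ((U p a M e : ℤ) : ℚ_[p]))
      - ((a:ℚ_[p])^M - 1) * (S - (p:ℚ_[p])^e * ((bernoulli M : ℚ) : ℚ_[p]))‖
      ≤ (p:ℝ)^(-(2*e:ℕ) : ℤ) := by
    refine (norm_sub_le_max _ _).trans (max_le hX ?_)
    rw [norm_mul]
    calc ‖(a:ℚ_[p])^M - 1‖ * ‖S - (p:ℚ_[p])^e * ((bernoulli M : ℚ) : ℚ_[p])‖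
        ≤ 1 * ((p:ℝ)^(-(2*e:ℕ) : ℤ)) := by
          refine mul_le_mul hA1 ?_ (norm_nonneg _) zero_le_one
          have hcoe : (-(2*e:ℕ) : ℤ) = -(2*(e:ℤ)) := by push_cast; ring
          rw [hSdef, hcoe]
          exact hY
      _ = (p:ℝ)^(-(2*e:ℕ) : ℤ) := one_mul _
  rw [div_eq_mul_inv, norm_mul, mul_inv, norm_mul]
  have hinvM : ‖((M:ℚ_[p]))⁻¹‖ = (p:ℝ) ^ (padicValNat p M) := norm_inv_nat M (by omega)
  have hinvpe : ‖(((p:ℚ_[p]))^e)⁻¹‖ = (p:ℝ) ^ (e:ℤ) := by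
    rw [norm_inv, norm_pow, Padic.norm_p, ← inv_pow, inv_inv, ← zpow_natCast]
  rw [hinvM, hinvpe]
  calc ‖_‖ * ((p:ℝ) ^ (padicValNat p M) * (p:ℝ) ^ (e:ℤ))
      ≤ (p:ℝ)^(-(2*e:ℕ) : ℤ) * ((p:ℝ) ^ (padicValNat p M) * (p:ℝ) ^ (e:ℤ)) := by
        refine mul_le_mul_of_nonneg_right hnum ?_
        positivity
    _ = (p:ℝ) ^ ((-(2*e:ℕ) : ℤ) + ((padicValNat p M : ℤ) + (e:ℤ))) := by
        rw [← zpow_natCast (p:ℝ) (padicValNat p M), ← zpow_add₀ (p_pos (p:=p)).ne',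
          ← zpow_add₀ (p_pos (p:=p)).ne']
    _ ≤ (p:ℝ) ^ (-1:ℤ) := zpow_le_p (p := p) (by omega)


lemma main_norm (m n : ℕ) (hp5 : 5 ≤ p) (hm : 0 < m) (hn : 0 < n)
    (hmeven : Even m) (hneven : Even n)
    (hcong : m ≡ n [MOD p - 1]) (hndvd : ¬ (p - 1) ∣ m) :
    ‖((bernoulli m / (m : ℚ) - bernoulli n / (n : ℚ) : ℚ) : ℚ_[p])‖ ≤ (p:ℝ)^(-1:ℤ) := by
  have hm2 : 2 ≤ m := by rcases hmeven with ⟨t, ht⟩; omega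
  have hn2 : 2 ≤ n := by rcases hneven with ⟨t, ht⟩; omega
  obtain ⟨a, hpa, hA⟩ := exists_primitive_root m hndvd
  have hAn : ¬ (p:ℤ) ∣ ((a:ℤ)^n - 1) := by
    intro h
    have h2 : (p:ℤ) ∣ (a:ℤ)^m - (a:ℤ)^n := int_pow_sub_dvd (by omega) (by omega) hcong a
    exact hA (by have := dvd_add h2 h; simpa using this)
  set e := max (padicValNat p m) (padicValNat p n) + 1 with hedef
  have hhm := half a e m hp5 hm hmeven (by omega) hpa
  have hhn := half a e n hp5 hn hneven (by omega) hpa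
  -- U_m ≡ U_n mod p
  have hcong' : m - 1 ≡ n - 1 [MOD p-1] := by
    have h1 : (m-1) + 1 ≡ (n-1) + 1 [MOD p-1] := by
      have e1 : m - 1 + 1 = m := by omega
      have e2 : n - 1 + 1 = n := by omega
      rw [e1, e2]; exact hcong
    exact Nat.ModEq.add_right_cancel' 1 h1
  have hU : (p:ℤ) ∣ (U p a m e - U p a n e) := by
    unfold U
    rw [← Finset.sum_sub_distrib]
    refine Finset.dvd_sum fun j _ => ?_
    have h3 : (p:ℤ) ∣ (((j*a) % (p^e) : ℕ) : ℤ)^(m-1) - (((j*a) % (p^e) : ℕ) : ℤ)^(n-1) :=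
      int_pow_sub_dvd (by omega) (by omega) hcong' _
    have h4 : ((j*a/(p^e) : ℕ) : ℤ) * (((j*a) % (p^e) : ℕ) : ℤ)^(m-1)
        - ((j*a/(p^e) : ℕ) : ℤ) * (((j*a) % (p^e) : ℕ) : ℤ)^(n-1)
        = ((j*a/(p^e) : ℕ) : ℤ) * ((((j*a) % (p^e) : ℕ) : ℤ)^(m-1)
            - (((j*a) % (p^e) : ℕ) : ℤ)^(n-1)) := by ring
    rw [h4]
    exact Dvd.dvd.mul_left h3 _
  have hUnorm : ‖((U p a m e : ℤ) : ℚ_[p]) - ((U p a n e : ℤ) : ℚ_[p])‖ ≤ (p:ℝ)^(-1:ℤ) := by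
    have : (((U p a m e - U p a n e : ℤ)) : ℚ_[p]) = ((U p a m e : ℤ) : ℚ_[p]) - ((U p a n e : ℤ) : ℚ_[p]) := by
      push_cast; ring
    rw [← this]
    have h5 := (Padic.norm_int_le_pow_iff_dvd (U p a m e - U p a n e) 1).mpr (by simpa using hU)
    simpa using h5
  -- norms of a^m - 1 and a^n - 1 are 1
  have hAcast : (((a:ℤ)^m - 1 : ℤ) : ℚ_[p]) = (a:ℚ_[p])^m - 1 := by push_cast; ring
  have hAncast : (((a:ℤ)^n - 1 : ℤ) : ℚ_[p]) = (a:ℚ_[p])^n - 1 := by push_cast; ring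
  have hAnorm : ‖(a:ℚ_[p])^m - 1‖ = 1 := by
    rw [← hAcast]
    rcases lt_or_eq_of_le (Padic.norm_int_le_one (p := p) ((a:ℤ)^m - 1)) with h | h
    · exact absurd ((Padic.norm_intCast_lt_one_iff).mp h) hA
    · exact h
  have hAnnorm : ‖(a:ℚ_[p])^n - 1‖ = 1 := by
    rw [← hAncast]
    rcases lt_or_eq_of_le (Padic.norm_int_le_one (p := p) ((a:ℤ)^n - 1)) with h | h
    · exact absurd ((Padic.norm_intCast_lt_one_iff).mp h) hAn
    · exact h
  -- ‖B_n / n‖ ≤ 1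
  have hp1 : (p:ℝ)^(-1:ℤ) ≤ 1 := by
    calc (p:ℝ)^(-1:ℤ) ≤ (p:ℝ)^(0:ℤ) := zpow_le_zpow_right₀ (by exact_mod_cast hp.out.one_lt.le) (by omega)
      _ = 1 := zpow_zero _
  have hBnA : ‖((bernoulli n : ℚ) : ℚ_[p]) / (n : ℚ_[p]) * ((a:ℚ_[p])^n - 1)‖ ≤ 1 := by
    have h6 : ((bernoulli n : ℚ) : ℚ_[p]) / (n : ℚ_[p]) * ((a:ℚ_[p])^n - 1)
        = (((bernoulli n : ℚ) : ℚ_[p]) / (n : ℚ_[p]) * ((a:ℚ_[p])^n - 1)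
            - ((U p a n e : ℤ) : ℚ_[p])) + ((U p a n e : ℤ) : ℚ_[p]) := by ring
    rw [h6]
    refine (Padic.nonarchimedean _ _).trans (max_le (hhn.trans hp1) ?_)
    exact Padic.norm_int_le_one _
  have hBn1 : ‖((bernoulli n : ℚ) : ℚ_[p]) / (n : ℚ_[p])‖ ≤ 1 := by
    rw [norm_mul, hAnnorm, mul_one] at hBnA
    exact hBnA
  -- the decomposition
  have hX4 : ‖((bernoulli n : ℚ) : ℚ_[p]) / (n : ℚ_[p])
      * (((a:ℚ_[p])^n - 1) - ((a:ℚ_[p])^m - 1))‖ ≤ (p:ℝ)^(-1:ℤ) := by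
    rw [norm_mul]
    have h7 : ((a:ℚ_[p])^n - 1) - ((a:ℚ_[p])^m - 1) = (((a:ℤ)^n - (a:ℤ)^m : ℤ) : ℚ_[p]) := by
      push_cast; ring
    have h8 : ‖(((a:ℤ)^n - (a:ℤ)^m : ℤ) : ℚ_[p])‖ ≤ (p:ℝ)^(-1:ℤ) := by
      have h9 := (Padic.norm_int_le_pow_iff_dvd ((a:ℤ)^n - (a:ℤ)^m) 1).mpr
        (by simpa using int_pow_sub_dvd (p := p) (by omega) (by omega) hcong.symm a)
      simpa using h9
    calc ‖((bernoulli n : ℚ) : ℚ_[p]) / (n : ℚ_[p])‖ * ‖((a:ℚ_[p])^n - 1) - ((a:ℚ_[p])^m - 1)‖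
        ≤ 1 * (p:ℝ)^(-1:ℤ) := by
          refine mul_le_mul hBn1 (by rw [h7]; exact h8) (norm_nonneg _) zero_le_one
      _ = (p:ℝ)^(-1:ℤ) := one_mul _
  have hdecomp : ((a:ℚ_[p])^m - 1) *
        (((bernoulli m : ℚ) : ℚ_[p]) / (m : ℚ_[p]) - ((bernoulli n : ℚ) : ℚ_[p]) / (n : ℚ_[p]))
      = ((((bernoulli m : ℚ) : ℚ_[p]) / (m : ℚ_[p]) * ((a:ℚ_[p])^m - 1)
            - ((U p a m e : ℤ) : ℚ_[p]))
          - (((bernoulli n : ℚ) : ℚ_[p]) / (n : ℚ_[p]) * ((a:ℚ_[p])^n - 1)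
            - ((U p a n e : ℤ) : ℚ_[p])))
        + ((((U p a m e : ℤ) : ℚ_[p]) - ((U p a n e : ℤ) : ℚ_[p]))
          + ((bernoulli n : ℚ) : ℚ_[p]) / (n : ℚ_[p])
            * (((a:ℚ_[p])^n - 1) - ((a:ℚ_[p])^m - 1))) := by ring
  have hprod : ‖((a:ℚ_[p])^m - 1) *
      (((bernoulli m : ℚ) : ℚ_[p]) / (m : ℚ_[p]) - ((bernoulli n : ℚ) : ℚ_[p]) / (n : ℚ_[p]))‖
      ≤ (p:ℝ)^(-1:ℤ) := by
    rw [hdecomp]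
    refine (Padic.nonarchimedean _ _).trans (max_le ?_ ?_)
    · exact (norm_sub_le_max _ _).trans (max_le hhm hhn)
    · exact (Padic.nonarchimedean _ _).trans (max_le hUnorm hX4)
  rw [norm_mul, hAnorm, one_mul] at hprod
  have hcast : ((bernoulli m / (m : ℚ) - bernoulli n / (n : ℚ) : ℚ) : ℚ_[p])
      = ((bernoulli m : ℚ) : ℚ_[p]) / (m : ℚ_[p]) - ((bernoulli n : ℚ) : ℚ_[p]) / (n : ℚ_[p]) := by
    push_cast; ring
  rw [hcast]
  exact hprod


end KummerAux

/-- Kummer's congruences: if `p` is prime, `m` and `n` are positive even integers with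
`m ≡ n (mod p - 1)` and `p - 1 ∤ m`, then `B_m/m - B_n/n` is `p`-integral (its denominator
is not divisible by `p`) and its numerator is divisible by `p`; that is,
`B_m/m ≡ B_n/n (mod p)`. -/
theorem stmt_17 (p m n : ℕ) (hp : p.Prime) (hm : 0 < m) (hn : 0 < n)
    (hmeven : Even m) (hneven : Even n)
    (hcong : m ≡ n [MOD p - 1]) (hndvd : ¬ (p - 1) ∣ m) :
    ¬ (p ∣ (bernoulli m / (m : ℚ) - bernoulli n / (n : ℚ)).den) ∧
      (p : ℤ) ∣ (bernoulli m / (m : ℚ) - bernoulli n / (n : ℚ)).num := by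
  haveI : Fact p.Prime := ⟨hp⟩
  have hp5 : 5 ≤ p := by
    by_contra h
    push_neg at h
    have h2 := hp.two_le
    interval_cases p
    · exact hndvd (by norm_num)
    · exact hndvd (by simpa using hmeven.two_dvd)
    · exact absurd hp (by norm_num)
  set q : ℚ := bernoulli m / (m : ℚ) - bernoulli n / (n : ℚ) with hqdef
  have hq : ‖(q : ℚ_[p])‖ ≤ (p:ℝ)^(-1:ℤ) :=
    KummerAux.main_norm m n hp5 hm hn hmeven hneven hcong hndvd
  have hden0 : (q.den : ℚ_[p]) ≠ 0 := by
    exact_mod_cast Nat.cast_ne_zero.mpr q.den_nz  -- might need fixing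
  have hnumeq : ((q.num : ℤ) : ℚ_[p]) = (q : ℚ_[p]) * ((q.den : ℕ) : ℚ_[p]) := by
    rw [Rat.cast_def]
    field_simp
  have hnum : (p:ℤ) ∣ q.num := by
    have h1 : ‖((q.num : ℤ) : ℚ_[p])‖ ≤ (p:ℝ)^(-1:ℤ) := by
      rw [hnumeq, norm_mul]
      calc ‖(q : ℚ_[p])‖ * ‖((q.den : ℕ) : ℚ_[p])‖ ≤ ((p:ℝ)^(-1:ℤ)) * 1 := by
            refine mul_le_mul hq ?_ (norm_nonneg _) ?_
            · simpa using Padic.norm_int_le_one (p := p) (q.den : ℤ)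
            · positivity
        _ = (p:ℝ)^(-1:ℤ) := mul_one _
    have h2 := (Padic.norm_int_le_pow_iff_dvd q.num 1).mp (by simpa using h1)
    simpa using h2
  refine ⟨?_, hnum⟩
  intro hpden
  have hpnum : p ∣ q.num.natAbs := by
    have := Int.natAbs_dvd_natAbs.mpr hnum
    simpa using this
  have hcop : Nat.Coprime q.num.natAbs q.den := q.reduced
  have h1 : p ∣ 1 := hcop ▸ Nat.dvd_gcd hpnum hpden
  have h2 := Nat.dvd_one.mp h1
  have h3 := hp.two_le
  omega
end

section
/- Let N be a positive integer, let χ be a Dirichlet character modulo N with values in ℂ, let λ be an integer, and let s ∈ ℂ satisfy λ + 2·Re(s) > 2. Then for every z in the complex upper half-plane, the family indexed by the nonzero pairs (m,n) ∈ ℤ × ℤ whose term at (m,n) is χ(n)·(mNz + n)^{−λ}·|mNz + n|^{−2s} is summable; i.e., the Eisenstein series E_{λ,N}(z, s, χ) = Σ_{(0,0)≠(m,n)∈ℤ×ℤ} χ(n)/((mNz+n)^λ |mNz+n|^{2s}) converges absolutely. -/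
/-- Absolute convergence of the nonholomorphic Eisenstein series of weight `λ`, level `N`,
and character `χ`: for `λ + 2 Re(s) > 2` and `z` in the upper half-plane, the family
`(m,n) ↦ χ(n)·(mNz+n)^(-λ)·|mNz+n|^(-2s)` over nonzero pairs `(m,n) ∈ ℤ × ℤ` is summable. -/
theorem stmt_18 (N : ℕ) (hN : 0 < N) (χ : DirichletCharacter ℂ N)
    (lam : ℤ) (s : ℂ) (hs : (lam : ℝ) + 2 * s.re > 2)
    (z : ℂ) (hz : 0 < z.im) :
    Summable (fun p : {p : ℤ × ℤ // p ≠ 0} =>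
      χ ((p.1.2 : ZMod N)) * ((p.1.1 : ℂ) * (N : ℂ) * z + (p.1.2 : ℂ)) ^ (-lam) *
        (((‖(p.1.1 : ℂ) * (N : ℂ) * z + (p.1.2 : ℂ)‖ : ℝ) : ℂ) ^ (-2 * s))) := by
  have hNz : 0 < ((N : ℂ) * z).im := by
    have : ((N : ℂ) * z).im = (N : ℝ) * z.im := by
      simp [Complex.mul_im]
    rw [this]
    have : (0:ℝ) < (N:ℝ) := by exact_mod_cast hN
    positivity
  set ζ : UpperHalfPlane := ⟨(N : ℂ) * z, hNz⟩ with hζ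
  set k : ℝ := (lam : ℝ) + 2 * s.re with hkdef
  have hk2 : 2 < k := hs
  have hk0 : 0 ≤ k := by linarith
  have hsum : Summable (fun p : {p : ℤ × ℤ // p ≠ 0} =>
      EisensteinSeries.r ζ ^ (-k) * ‖(![p.1.1, p.1.2] : Fin 2 → ℤ)‖ ^ (-k)) := by
    have h1 := (EisensteinSeries.summable_one_div_norm_rpow hk2).mul_left
      (EisensteinSeries.r ζ ^ (-k))
    have h2 : Summable (fun p : ℤ × ℤ =>
        EisensteinSeries.r ζ ^ (-k) * ‖(![p.1, p.2] : Fin 2 → ℤ)‖ ^ (-k)) := by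
      refine ((finTwoArrowEquiv ℤ).summable_iff).mp (h1.congr fun x => ?_)
      have hxeq : (![x 0, x 1] : Fin 2 → ℤ) = x := by ext i; fin_cases i <;> rfl
      simp [finTwoArrowEquiv, Function.comp, hxeq]
    exact h2.subtype _
  refine Summable.of_norm_bounded hsum ?_
  rintro ⟨⟨m, n⟩, hp⟩
  set w : ℂ := (m:ℂ) * (N:ℂ) * z + (n:ℂ) with hwdef
  have hx : (![m, n] : Fin 2 → ℤ) ≠ 0 := by
    intro h
    apply hp
    have h0 := congrFun h 0
    have h1 := congrFun h 1
    simp at h0 h1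
    exact Prod.ext h0 h1
  have hxr : (![(m:ℝ), (n:ℝ)] : Fin 2 → ℝ) ≠ 0 := by
    intro h
    apply hx
    have h0 := congrFun h 0
    have h1 := congrFun h 1
    simp at h0 h1
    ext i
    fin_cases i <;> simp [h0, h1]
  have hw : w ≠ 0 := by
    have := UpperHalfPlane.linear_ne_zero (cd := ![(m:ℝ), (n:ℝ)]) ζ hxr
    simpa [hwdef, hζ, UpperHalfPlane.coe_mk, mul_assoc] using this
  have habs : 0 < ‖w‖ := by
    simpa using hw
  -- compute the norm of the summand
  have hnorm : ‖χ ((n : ZMod N)) * w ^ (-lam) *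
      (((‖w‖ : ℝ) : ℂ) ^ (-2 * s))‖
      = ‖χ ((n : ZMod N))‖ * ‖w‖ ^ (-k) := by
    rw [norm_mul, norm_mul, mul_assoc]
    congr 1
    rw [norm_zpow,
      Complex.norm_cpow_eq_rpow_re_of_pos habs,
      ← Real.rpow_intCast _ (-lam), ← Real.rpow_add habs]
    congr 1
    rw [hkdef]
    simp [Complex.mul_re]
    ring
  rw [hnorm]
  calc ‖χ ((n : ZMod N))‖ * ‖w‖ ^ (-k)
      ≤ 1 * ‖w‖ ^ (-k) :=
        mul_le_mul_of_nonneg_right (DirichletCharacter.norm_le_one χ _) (by positivity)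
    _ = ‖w‖ ^ (-k) := one_mul _
    _ ≤ EisensteinSeries.r ζ ^ (-k) * ‖(![m, n] : Fin 2 → ℤ)‖ ^ (-k) := by
        have := EisensteinSeries.summand_bound ζ hk0 ![m, n]
        simpa [hwdef, hζ, UpperHalfPlane.coe_mk, mul_assoc] using this
end
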